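/- Let d ≥ 1, N ∈ ℕ, κ ∈ ℝ^{d+1} with each κ_i > −1, and set λ_κ = |κ|+d+1. For every x ∈ Z_N^{d+1} and every α ∈ ℕ^{d+1} with |α| ≤ N, the shifted monomial m_α expands in monic Hahn polynomials as m_α(x) = (−1)^{|α|} · Σ_{β ≤ α} ((−α)_β (−N)_{|α|} (κ+1)_α (λ_κ)_{2|β|} / (β! (−N)_{|β|} (κ+1)_β (λ_κ)_{|α|+|β|})) · Q_β(x; κ, N). -/

import Mathlib

open Finset

/-- Pochhammer symbol `(a)_k = a (a+1) ⋯ (a+k-1)`. -/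
noncomputable def poch (a : ℝ) : ℕ → ℝ
  | 0 => 1
  | k + 1 => poch a k * (a + k)

/-- Multi-index Pochhammer `(x)_γ = ∏ i (x i)_{γ i}`. -/
noncomputable def pochV {m : ℕ} (x : Fin m → ℝ) (γ : Fin m → ℕ) : ℝ :=
  ∏ i, poch (x i) (γ i)

/-- Multi-index factorial `γ! = ∏ i (γ i)!` (as a real number). -/
noncomputable def mfact {m : ℕ} (γ : Fin m → ℕ) : ℝ :=
  ∏ i, (Nat.factorial (γ i) : ℝ)

/-- Shifted monomial `m_γ(x) = (-1)^{|γ|} (-x)_γ`. -/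
noncomputable def mono {m : ℕ} (γ : Fin m → ℕ) (x : Fin m → ℝ) : ℝ :=
  (-1 : ℝ) ^ (∑ i, γ i) * pochV (fun i => -(x i)) γ

/-- `Z_N^{d+1} = {α ∈ ℕ^{d+1} : |α| = N}` as a finite set. -/
def ZN (d N : ℕ) : Finset (Fin (d + 1) → ℕ) :=
  (Fintype.piFinset fun _ => Finset.range (N + 1)).filter fun α => ∑ i, α i = N

/-- `{ν ∈ ℕ^d : |ν| = n}` as a finite set. -/
def idxSet (d n : ℕ) : Finset (Fin d → ℕ) :=
  (Fintype.piFinset fun _ => Finset.range (n + 1)).filter fun ν => ∑ i, ν i = n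

/-- The finite set `{γ ∈ ℕ^m : γ ≤ α}`. -/
def below {m : ℕ} (α : Fin m → ℕ) : Finset (Fin m → ℕ) :=
  Fintype.piFinset fun i => Finset.range (α i + 1)

/-- Monic Hahn polynomial `Q_α(x; κ, N)`. -/
noncomputable def monicQ (d N : ℕ) (κ : Fin (d + 1) → ℝ) (α : Fin (d + 1) → ℕ)
    (x : Fin (d + 1) → ℝ) : ℝ :=
  poch (-(N : ℝ)) (∑ i, α i) * pochV (fun i => κ i + 1) α /
      poch ((∑ i, κ i) + d + (∑ i, α i)) (∑ i, α i) *
    ∑ γ ∈ below α,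
      pochV (fun i => -(α i : ℝ)) γ * poch ((∑ i, κ i) + d + (∑ i, α i)) (∑ i, γ i) *
          (-1 : ℝ) ^ (∑ i, γ i) /
          (mfact γ * pochV (fun i => κ i + 1) γ * poch (-(N : ℝ)) (∑ i, γ i)) *
        mono γ x

/-- One-variable Hahn polynomial `Q_n(x; a, b, M)` (a `₃F₂` sum). -/
noncomputable def hahn1 (n : ℕ) (x a b M : ℝ) : ℝ :=
  ∑ k ∈ Finset.range (n + 1),
    poch (-(n : ℝ)) k * poch ((n : ℝ) + a + b + 1) k * poch (-x) k /
      (poch (a + 1) k * poch (-M) k * (Nat.factorial k : ℝ))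

/-- The parameter `a_j = κ_{j+1}+⋯+κ_{d+1} + 2|ν^{j+1}| + d - j` (1-based `j`). -/
noncomputable def aj (d : ℕ) (κ : Fin (d + 1) → ℝ) (ν : Fin d → ℕ) (j : Fin d) : ℝ :=
  (∑ i ∈ Finset.univ.filter (fun i : Fin (d + 1) => (j : ℕ) < (i : ℕ)), κ i) +
    2 * (∑ i ∈ Finset.univ.filter (fun i : Fin d => (j : ℕ) < (i : ℕ)), (ν i : ℝ)) +
    ((d - 1 - (j : ℕ) : ℕ) : ℝ)

/-- `|x_{j-1}| = x_1 + ⋯ + x_{j-1}` (1-based `j`). -/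
noncomputable def sumLt (d : ℕ) (x : Fin (d + 1) → ℕ) (j : Fin d) : ℝ :=
  ∑ i ∈ Finset.univ.filter (fun i : Fin (d + 1) => (i : ℕ) < (j : ℕ)), (x i : ℝ)

/-- `|ν^{j+1}| = ν_{j+1} + ⋯ + ν_d` (1-based `j`). -/
noncomputable def sumGt (d : ℕ) (ν : Fin d → ℕ) (j : Fin d) : ℝ :=
  ∑ i ∈ Finset.univ.filter (fun i : Fin d => (j : ℕ) < (i : ℕ)), (ν i : ℝ)

/-- Hahn polynomial of `d` variables `H_ν(x; κ, N)`. -/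
noncomputable def hahnH (d N : ℕ) (κ : Fin (d + 1) → ℝ) (ν : Fin d → ℕ)
    (x : Fin (d + 1) → ℕ) : ℝ :=
  (-1 : ℝ) ^ (∑ i, ν i) / poch (-(N : ℝ)) (∑ i, ν i) *
    ∏ j : Fin d,
      poch (κ j.castSucc + 1) (ν j) / poch (aj d κ ν j + 1) (ν j) *
        poch (-(N : ℝ) + sumLt d x j + sumGt d ν j) (ν j) *
        hahn1 (ν j) (x j.castSucc : ℝ) (κ j.castSucc) (aj d κ ν j)
          ((N : ℝ) - sumLt d x j - sumGt d ν j)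

/-- Squared norm `B_ν(κ, N)` of the Hahn polynomial `H_ν(·; κ, N)`. -/
noncomputable def Bnorm (d N : ℕ) (κ : Fin (d + 1) → ℝ) (ν : Fin d → ℕ) : ℝ :=
  (-1 : ℝ) ^ (∑ i, ν i) * poch ((∑ i, κ i) + d + 1) (N + ∑ i, ν i) /
      (poch (-(N : ℝ)) (∑ i, ν i) * poch ((∑ i, κ i) + d + 1) N *
        poch ((∑ i, κ i) + d + 1) (2 * ∑ i, ν i)) *
    ∏ j : Fin d,
      poch (κ j.castSucc + aj d κ ν j + 1) (2 * ν j) * poch (κ j.castSucc + 1) (ν j) *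
          (Nat.factorial (ν j) : ℝ) /
        (poch (κ j.castSucc + aj d κ ν j + 1) (ν j) * poch (aj d κ ν j + 1) (ν j))

/-- Projection `Q_{α,n}(x; κ, N)` of `m_α/(κ+1)_α` onto the space of degree `n`. -/
noncomputable def monicQn (d N : ℕ) (κ : Fin (d + 1) → ℝ) (α : Fin (d + 1) → ℕ) (n : ℕ)
    (x : Fin (d + 1) → ℝ) : ℝ :=
  (-1 : ℝ) ^ (∑ i, α i) * poch (-(N : ℝ)) (∑ i, α i) * poch ((∑ i, κ i) + d + 1) (2 * n) /
      (poch (-(N : ℝ)) n * poch ((∑ i, κ i) + d + 1) ((∑ i, α i) + n)) *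
    ∑ β ∈ ZN d n,
      pochV (fun i => -(α i : ℝ)) β / (mfact β * pochV (fun i => κ i + 1) β) *
        monicQ d N κ β x

/-- The kernel `E_k(x, y; κ) = Σ_{|γ|=k} (-x)_γ (-y)_γ / (γ! (κ+1)_γ)`. -/
noncomputable def Efun (d : ℕ) (κ : Fin (d + 1) → ℝ) (x y : Fin (d + 1) → ℕ) (k : ℕ) : ℝ :=
  ∑ γ ∈ ZN d k,
    pochV (fun i => -(x i : ℝ)) γ * pochV (fun i => -(y i : ℝ)) γ /
      (mfact γ * pochV (fun i => κ i + 1) γ)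

/-- Monic Jacobi polynomial on the simplex `R_α^κ(x)`. -/
noncomputable def jacobiR (d : ℕ) (κ : Fin (d + 1) → ℝ) (α : Fin (d + 1) → ℕ)
    (x : Fin d → ℝ) : ℝ :=
  (-1 : ℝ) ^ (∑ i, α i) * pochV (fun i => κ i + 1) α /
      poch ((∑ i, κ i) + d + (∑ i, α i)) (∑ i, α i) *
    ∑ γ ∈ below α,
      pochV (fun i => -(α i : ℝ)) γ * poch ((∑ i, κ i) + d + (∑ i, α i)) (∑ i, γ i) /
          (pochV (fun i => κ i + 1) γ * mfact γ) *
        ∏ i, (Fin.snoc x (1 - ∑ i, x i) : Fin (d + 1) → ℝ) i ^ γ i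

/-- One-variable Krawtchouk polynomial `K_n(x; p, M)`. -/
noncomputable def kraw1 (n : ℕ) (x p M : ℝ) : ℝ :=
  ∑ k ∈ Finset.range (n + 1),
    poch (-(n : ℝ)) k * poch (-x) k / (poch (-M) k * (Nat.factorial k : ℝ) * p ^ k)

/-- The extended parameter `𝛒 = (ρ_1, …, ρ_d, 1 - |ρ|)`. -/
noncomputable def brho (d : ℕ) (ρ : Fin d → ℝ) : Fin (d + 1) → ℝ :=
  Fin.snoc ρ (1 - ∑ i, ρ i)

/-- `𝛒^γ = ∏ i 𝛒_i^{γ i}`. -/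
noncomputable def bpow (d : ℕ) (ρ : Fin d → ℝ) (γ : Fin (d + 1) → ℕ) : ℝ :=
  ∏ i, brho d ρ i ^ γ i

/-- `|𝛒_j| = ρ_1 + ⋯ + ρ_j` (1-based `j`). -/
noncomputable def sumLe (d : ℕ) (ρ : Fin d → ℝ) (j : Fin d) : ℝ :=
  ∑ i ∈ Finset.univ.filter (fun i : Fin d => (i : ℕ) ≤ (j : ℕ)), ρ i

/-- `|𝛒_{j-1}| = ρ_1 + ⋯ + ρ_{j-1}` (1-based `j`). -/
noncomputable def sumLtρ (d : ℕ) (ρ : Fin d → ℝ) (j : Fin d) : ℝ :=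
  ∑ i ∈ Finset.univ.filter (fun i : Fin d => (i : ℕ) < (j : ℕ)), ρ i

/-- Krawtchouk polynomial of `d` variables `K_ν(x; ρ, N)`. -/
noncomputable def krawH (d N : ℕ) (ρ : Fin d → ℝ) (ν : Fin d → ℕ)
    (x : Fin (d + 1) → ℕ) : ℝ :=
  (-1 : ℝ) ^ (∑ i, ν i) / poch (-(N : ℝ)) (∑ i, ν i) *
    ∏ j : Fin d,
      ρ j ^ ν j / (1 - sumLe d ρ j) ^ ν j *
        poch (-(N : ℝ) + sumLt d x j + sumGt d ν j) (ν j) *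
        kraw1 (ν j) (x j.castSucc : ℝ) (ρ j / (1 - sumLtρ d ρ j))
          ((N : ℝ) - sumLt d x j - sumGt d ν j)

/-- Squared norm `C_ν(ρ, N)` of the Krawtchouk polynomial `K_ν(·; ρ, N)`. -/
noncomputable def Cnorm (d N : ℕ) (ρ : Fin d → ℝ) (ν : Fin d → ℕ) : ℝ :=
  (-1 : ℝ) ^ (∑ i, ν i) / (poch (-(N : ℝ)) (∑ i, ν i) * (Nat.factorial N : ℝ)) *
    ∏ j : Fin d,
      (Nat.factorial (ν j) : ℝ) * ρ j ^ ν j /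
        (1 - sumLe d ρ j) ^ ((ν j : ℤ) - ((Fin.snoc ν 0 : Fin (d + 1) → ℕ) j.succ : ℤ))

/-- Monic Krawtchouk polynomial `L_α(x; ρ, N)`. -/
noncomputable def monicL (d N : ℕ) (ρ : Fin d → ℝ) (α : Fin (d + 1) → ℕ)
    (x : Fin (d + 1) → ℝ) : ℝ :=
  poch (-(N : ℝ)) (∑ i, α i) * bpow d ρ α *
    ∑ γ ∈ below α,
      pochV (fun i => -(α i : ℝ)) γ * (-1 : ℝ) ^ (∑ i, γ i) /
          (mfact γ * poch (-(N : ℝ)) (∑ i, γ i) * bpow d ρ γ) *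
        mono γ x

/-- Projection `L_{α,n}(x; ρ, N)` of `m_α/𝛒^α` onto the space of degree `n`. -/
noncomputable def monicLn (d N : ℕ) (ρ : Fin d → ℝ) (α : Fin (d + 1) → ℕ) (n : ℕ)
    (x : Fin (d + 1) → ℝ) : ℝ :=
  (-1 : ℝ) ^ (∑ i, α i) * poch (-(N : ℝ)) (∑ i, α i) / poch (-(N : ℝ)) n *
    ∑ β ∈ ZN d n,
      pochV (fun i => -(α i : ℝ)) β / (mfact β * bpow d ρ β) * monicL d N ρ β x

/-- The kernel `F_k(x, y; ρ) = Σ_{|γ|=k} (-x)_γ (-y)_γ / (γ! 𝛒^γ)`. -/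
noncomputable def Ffun (d : ℕ) (ρ : Fin d → ℝ) (x y : Fin (d + 1) → ℕ) (k : ℕ) : ℝ :=
  ∑ γ ∈ ZN d k,
    pochV (fun i => -(x i : ℝ)) γ * pochV (fun i => -(y i : ℝ)) γ / (mfact γ * bpow d ρ γ)

/-! Both sides are linear combinations of the shifted monomials `m_γ`, `γ ≤ α`, so it suffices
that the two triangular coefficient matrices (of `m` in terms of `Q`, and of `Q` in terms of `m`)
are mutually inverse. Writing `β = γ + δ` with `δ ≤ μ = α - γ`, the `(α, γ)` entry of their product
is a multiple of `∑_{δ ≤ μ} ∏_i binom(μ_i, δ_i) (-1)^{|δ|} (b + 2|δ|) / (b + |δ|)_{|μ|+1}` with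
`b = |κ| + d + 2|γ|`, and the Vandermonde identity collapses this to the one-variable sum
`∑_j binom(M, j) (-1)^j (b + 2j) / (b + j)_{M+1}`, `M = |μ|`. That sum is `0` for `M ≥ 1`: writing
`(b + 2j) / (b + j)_{M+1} = 1 / (b + 1 + j)_M + j / (b + j)_{M+1}` turns it into two `M`-th forward
differences of `y ↦ 1 / (y)_m`, which cancel. -/

open Polynomial in
lemma poch_eq_ascPochhammer_eval (a : ℝ) (k : ℕ) : poch a k = (ascPochhammer ℝ k).eval a := by
  induction k with
  | zero => simp [poch]
  | succ k ih => rw [poch, ih, ascPochhammer_succ_eval]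

open Polynomial in
lemma poch_add (a : ℝ) (s t : ℕ) : poch a (s + t) = poch a s * poch (a + s) t := by
  simp only [poch_eq_ascPochhammer_eval, ← ascPochhammer_mul, eval_mul, eval_comp, eval_add,
    eval_X, eval_natCast]

lemma poch_succ_left (a : ℝ) (k : ℕ) : poch a (k + 1) = a * poch (a + 1) k := by
  rw [add_comm, poch_add]
  simp [poch]

lemma poch_pos {a : ℝ} (ha : 0 < a) (k : ℕ) : 0 < poch a k := by
  rw [poch_eq_ascPochhammer_eval]
  exact ascPochhammer_pos k a ha

lemma poch_neg_natCast (c g : ℕ) : poch (-c) g = (-1) ^ g * c.descFactorial g := by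
  rw [poch_eq_ascPochhammer_eval, ascPochhammer_eval_neg_eq_descPochhammer,
    descPochhammer_eval_eq_descFactorial]

lemma poch_neg_natCast_ne_zero {c g : ℕ} (h : g ≤ c) : poch (-c) g ≠ 0 := by
  have : c.descFactorial g ≠ 0 := by simpa [Nat.descFactorial_eq_zero_iff_lt] using h
  rw [poch_neg_natCast]
  positivity

lemma poch_add_natCast_ne_zero {a : ℝ} (ha : -1 < a) {n k : ℕ} (hk : k ≤ n) :
    poch (a + n) k ≠ 0 := by
  rcases k with _ | k
  · simp [poch]
  · have : (1 : ℝ) ≤ n := by exact_mod_cast (Nat.succ_pos k).trans_le hk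
    exact (poch_pos (by linarith) _).ne'

lemma poch_neg_natCast_add_mul (c g e : ℕ) :
    poch (-c) (g + e) * poch (-((g + e : ℕ) : ℝ)) g =
      (-1) ^ (g + e) * (g + e).factorial * poch (-c) g * (c - g).choose e := by
  have hnat : c.descFactorial (g + e) * (g + e).descFactorial g =
      (g + e).factorial * c.descFactorial g * (c - g).choose e := by
    rw [← Nat.descFactorial_mul_descFactorial (Nat.le_add_right g e), Nat.add_sub_cancel_left,
      Nat.descFactorial_eq_factorial_mul_choose, ← Nat.factorial_mul_descFactorial
      (Nat.le_add_right g e), Nat.add_sub_cancel_left]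
    ring
  have hreal := congrArg (Nat.cast : ℕ → ℝ) hnat
  push_cast at hreal
  simp only [poch_neg_natCast]
  linear_combination (-1) ^ (g + e) * (-1) ^ g * hreal

open fwdDiff

lemma fwdDiff_inv_poch {y : ℝ} (hy : 0 < y) (m : ℕ) :
    Δ_[1] (fun n : ℕ => (poch (y + n) m)⁻¹) =
      (-(m : ℝ)) • fun n : ℕ => (poch (y + n) (m + 1))⁻¹ := by
  ext n
  have hyn : 0 < y + n := by positivity
  have h₁ : poch (y + n) (m + 1) = poch (y + n) m * (y + n + m) := rfl
  have h₂ : poch (y + n) (m + 1) = (y + n) * poch (y + n + 1) m := poch_succ_left _ _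
  have e₁ : (poch (y + n + 1) m)⁻¹ = (y + n) / poch (y + n) (m + 1) := by
    rw [h₂, div_mul_cancel_left₀ hyn.ne']
  have e₀ : (poch (y + n) m)⁻¹ = (y + n + m) / poch (y + n) (m + 1) := by
    rw [h₁, div_mul_cancel_right₀ (by positivity)]
  simp only [fwdDiff, Nat.cast_add, Nat.cast_one, ← add_assoc, Pi.smul_apply, smul_eq_mul, e₀,
    e₁]
  ring

lemma fwdDiff_iter_inv_poch {y : ℝ} (hy : 0 < y) (M m : ℕ) :
    (Δ_[1])^[M] (fun n : ℕ => (poch (y + n) m)⁻¹) 0 =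
      (-1) ^ M * poch m M / poch y (m + M) := by
  induction M generalizing m with
  | zero => simp [poch]
  | succ M ih =>
    rw [Function.iterate_succ_apply, fwdDiff_inv_poch hy, fwdDiff_iter_const_smul, Pi.smul_apply,
      ih, smul_eq_mul, poch_succ_left, ← add_assoc, add_right_comm m 1 M]
    push_cast
    ring

lemma sum_alternating_choose_div_poch {y : ℝ} (hy : 0 < y) (M m : ℕ) :
    ∑ j ∈ range (M + 1), (-1) ^ j * (M.choose j : ℝ) / poch (y + j) m =
      poch m M / poch y (m + M) := by
  have h := fwdDiff_iter_inv_poch hy M m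
  simp only [fwdDiff_iter_eq_sum_shift, zero_add, smul_eq_mul, mul_one, zsmul_eq_mul] at h
  push_cast at h
  calc ∑ j ∈ range (M + 1), (-1) ^ j * (M.choose j : ℝ) / poch (y + j) m
      = (-1) ^ M * ∑ k ∈ range (M + 1),
          (-1) ^ (M - k) * (M.choose k : ℝ) * (poch (y + k) m)⁻¹ := by
        rw [mul_sum]
        refine sum_congr rfl fun j hj => ?_
        have hsign : (-1 : ℝ) ^ M * (-1) ^ (M - j) = (-1) ^ j := by
          rw [← pow_add, show M + (M - j) = 2 * (M - j) + j by
            have := mem_range.1 hj; omega, pow_add, pow_mul]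
          norm_num
        rw [← hsign]
        ring
    _ = poch m M / poch y (m + M) := by
        rw [h, ← mul_div_assoc, ← mul_assoc, ← mul_pow]
        norm_num

/-- `(b + 2j) / (b + j)_{M+1}`, split so as to stay correct at `b = j = 0`. -/
noncomputable def wellPoisedTerm (b : ℝ) (M j : ℕ) : ℝ :=
  1 / poch (b + 1 + j) M + j / poch (b + j) (M + 1)

lemma sum_alternating_choose_mul_wellPoisedTerm {b : ℝ} (hb : -1 < b) (M : ℕ) :
    ∑ j ∈ range (M + 1), (M.choose j : ℝ) * ((-1) ^ j * wellPoisedTerm b M j) =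
      if M = 0 then 1 else 0 := by
  rcases M with _ | M
  · simp [wellPoisedTerm, poch]
  have hb₁ : 0 < b + 1 := by linarith
  have hsplit :
      ∑ j ∈ range (M + 2), ((M + 1).choose j : ℝ) * ((-1) ^ j * wellPoisedTerm b (M + 1) j) =
        ∑ j ∈ range (M + 2), (-1) ^ j * ((M + 1).choose j : ℝ) / poch (b + 1 + j) (M + 1) +
          ∑ j ∈ range (M + 2),
            (-1) ^ j * ((M + 1).choose j : ℝ) * (j / poch (b + j) (M + 2)) := by
    rw [← sum_add_distrib]
    refine sum_congr rfl fun j _ => ?_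
    rw [wellPoisedTerm]
    ring
  have hweighted :
      ∑ j ∈ range (M + 2), (-1) ^ j * ((M + 1).choose j : ℝ) * (j / poch (b + j) (M + 2)) =
        -(M + 1) * (poch (M + 2 : ℕ) M / poch (b + 1) (M + 2 + M)) := by
    rw [sum_range_succ', ← sum_alternating_choose_div_poch hb₁ M (M + 2), mul_sum]
    simp only [CharP.cast_eq_zero, zero_div, mul_zero, add_zero]
    refine sum_congr rfl fun i _ => ?_
    have hchoose : ((M + 1 : ℕ) : ℝ) * M.choose i = (M + 1).choose (i + 1) * (i + 1) := by
      exact_mod_cast Nat.add_one_mul_choose_eq M i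
    push_cast at hchoose ⊢
    rw [show b + (i + 1) = b + 1 + i by ring, pow_succ]
    linear_combination ((-1) ^ i / poch (b + 1 + i) (M + 2)) * hchoose
  rw [hsplit, sum_alternating_choose_div_poch hb₁, hweighted, poch_succ_left,
    show M + 1 + (M + 1) = M + 2 + M by ring, if_neg M.succ_ne_zero]
  push_cast
  ring_nf

lemma poch_ratio_eq_wellPoisedTerm {a : ℝ} (ha : -1 < a) (k M j : ℕ) :
    poch (a + 1) (2 * (k + j)) * poch (a + ↑(k + j)) k /
        (poch (a + 1) (k + M + (k + j)) * poch (a + ↑(k + j)) (k + j)) =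
      wellPoisedTerm (a + 2 * k) M j := by
  have hk : poch (a + ↑(k + j)) k ≠ 0 := poch_add_natCast_ne_zero ha (by omega)
  rcases j with _ | j
  · have hsplit : poch (a + 1) (k + M + k) = poch (a + 1) (2 * k) * poch (a + 2 * k + 1) M := by
      rw [show k + M + k = 2 * k + M by ring, poch_add]
      push_cast
      ring_nf
    have h₁ : poch (a + 1) (2 * k) ≠ 0 := (poch_pos (by linarith) _).ne'
    have h₂ : poch (a + 2 * k + 1) M ≠ 0 :=
      (poch_pos (by linarith [k.cast_nonneg (α := ℝ)]) _).ne'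
    simp only [add_zero] at hk ⊢
    rw [hsplit, wellPoisedTerm, Nat.cast_zero, add_zero, zero_div, add_zero]
    field_simp
  · -- with `x = a + n`, `n = k + j + 1`, both sides reduce to `(x + n) / ((x + k) (x + k + 1)_M)`
    set x := a + ↑(k + (j + 1)) with hx
    have hx₀ : 0 < x := by
      rw [hx]; push_cast; linarith [k.cast_nonneg (α := ℝ), j.cast_nonneg (α := ℝ)]
    have hshift : a + 1 + ↑(k + j) = x := by rw [hx]; push_cast; ring
    have hnum : poch (a + 1) (2 * (k + (j + 1))) =
        poch (a + 1) (k + j) * (poch x (k + (j + 1)) * (x + ↑(k + (j + 1)))) := by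
      rw [show 2 * (k + (j + 1)) = k + j + (k + (j + 1) + 1) by ring, poch_add _ (k + j), hshift]
      rfl
    have hden : poch (a + 1) (k + M + (k + (j + 1))) =
        poch (a + 1) (k + j) * (poch x k * (x + k) * poch (x + k + 1) M) := by
      rw [show k + M + (k + (j + 1)) = k + j + (k + 1 + M) by ring, poch_add _ (k + j), hshift,
        poch_add x, Nat.cast_add_one, ← add_assoc]
      rfl
    have hrhs : wellPoisedTerm (a + 2 * k) M (j + 1) =
        1 / poch (x + k + 1) M + (j + 1) / ((x + k) * poch (x + k + 1) M) := by
      have e : a + 2 * k + ↑(j + 1) = x + k := by rw [hx]; push_cast; ring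
      rw [wellPoisedTerm, add_right_comm _ 1, e, poch_succ_left, Nat.cast_add_one]
    have h₁ : poch (a + 1) (k + j) ≠ 0 := (poch_pos (by linarith) _).ne'
    have h₂ : poch x (k + (j + 1)) ≠ 0 := (poch_pos hx₀ _).ne'
    have h₃ : (0 : ℝ) < x + k := by positivity
    have h₄ : poch (x + k + 1) M ≠ 0 := (poch_pos (by linarith) _).ne'
    rw [hnum, hden, hrhs]
    field_simp
    push_cast
    ring

section MultiIndex

variable {m : ℕ}

lemma mem_below {α δ : Fin m → ℕ} : δ ∈ below α ↔ δ ≤ α := by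
  simp [below, Pi.le_def]

lemma sum_below_eq_sum_below_sub {M : Type*} [AddCommMonoid M] {γ α : Fin m → ℕ}
    (hγ : γ ≤ α) (f : (Fin m → ℕ) → M) (hf : ∀ β, ¬γ ≤ β → f β = 0) :
    ∑ β ∈ below α, f β = ∑ δ ∈ below (α - γ), f (γ + δ) := by
  have hIcc : ∀ μ : Fin m → ℕ, below μ = Icc 0 μ := fun μ => by ext; simp [mem_below]
  have hshift : (Icc 0 (α - γ)).map (addLeftEmbedding γ) = Icc γ α := by
    rw [map_add_left_Icc, add_zero, add_tsub_cancel_of_le hγ]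
  rw [hIcc, hIcc, ← sum_subset (Icc_subset_Icc_left (zero_le (a := γ))) fun β hβα hβ =>
    hf β fun h => hβ (mem_Icc.2 ⟨h, (mem_Icc.1 hβα).2⟩), ← hshift, sum_map]
  rfl

lemma mfact_pos (γ : Fin m → ℕ) : 0 < mfact γ :=
  prod_pos fun i _ => mod_cast (γ i).factorial_pos

lemma pochV_pos {x : Fin m → ℝ} (hx : ∀ i, 0 < x i) (γ : Fin m → ℕ) : 0 < pochV x γ :=
  prod_pos fun i _ => poch_pos (hx i) (γ i)

lemma pochV_neg_natCast_of_not_le {c γ : Fin m → ℕ} (h : ¬γ ≤ c) :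
    pochV (fun i => -(c i : ℝ)) γ = 0 := by
  obtain ⟨i, hi⟩ : ∃ i, c i < γ i := by simpa [Pi.le_def] using h
  refine prod_eq_zero (mem_univ i) ?_
  rw [poch_neg_natCast, Nat.descFactorial_eq_zero_iff_lt.2 hi, Nat.cast_zero, mul_zero]

lemma pochV_neg_natCast_ne_zero {c γ : Fin m → ℕ} (h : γ ≤ c) :
    pochV (fun i => -(c i : ℝ)) γ ≠ 0 :=
  prod_ne_zero_iff.2 fun i _ => poch_neg_natCast_ne_zero (h i)

lemma pochV_neg_natCast_self (c : Fin m → ℕ) :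
    pochV (fun i => -(c i : ℝ)) c = (-1) ^ (∑ i, c i) * mfact c := by
  simp only [pochV, mfact, poch_neg_natCast, Nat.descFactorial_self, prod_mul_distrib,
    prod_pow_eq_pow_sum]

lemma pochV_neg_natCast_add_mul (c γ δ : Fin m → ℕ) :
    pochV (fun i => -(c i : ℝ)) (γ + δ) * pochV (fun i => -((γ + δ) i : ℝ)) γ =
      (-1) ^ (∑ i, (γ + δ) i) * mfact (γ + δ) * pochV (fun i => -(c i : ℝ)) γ *
        ∏ i, (((c - γ) i).choose (δ i) : ℝ) := by
  simp only [pochV, mfact, ← prod_mul_distrib, ← prod_pow_eq_pow_sum]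
  exact prod_congr rfl fun i _ => poch_neg_natCast_add_mul _ _ _

open Polynomial in
lemma sum_below_prod_choose_mul (μ : Fin m → ℕ) (f : ℕ → ℝ) :
    ∑ δ ∈ below μ, (∏ i, ((μ i).choose (δ i) : ℝ)) * f (∑ i, δ i) =
      ∑ j ∈ range (∑ i, μ i + 1), ((∑ i, μ i).choose j : ℝ) * f j := by
  have hexpand : (X + 1 : ℝ[X]) ^ (∑ i, μ i) =
      ∑ δ ∈ below μ, ((∏ i, (μ i).choose (δ i) : ℕ) : ℝ[X]) * X ^ (∑ i, δ i) := by
    simp only [← prod_pow_eq_pow_sum, add_pow, one_pow, one_mul, below, prod_univ_sum,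
      Nat.cast_prod, ← prod_mul_distrib, mul_comm]
  calc ∑ δ ∈ below μ, (∏ i, ((μ i).choose (δ i) : ℝ)) * f (∑ i, δ i)
      = ∑ δ ∈ below μ, (∏ i, ((μ i).choose (δ i) : ℝ)) *
          ∑ j ∈ range (∑ i, μ i + 1), (X ^ (∑ i, δ i) : ℝ[X]).coeff j * f j := by
        refine sum_congr rfl fun δ hδ => ?_
        have : ∑ i, δ i < ∑ i, μ i + 1 :=
          Nat.lt_succ_of_le (sum_le_sum fun i _ => mem_below.1 hδ i)
        simp [coeff_X_pow, mem_range.2 this]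
    _ = ∑ j ∈ range (∑ i, μ i + 1), ((X + 1 : ℝ[X]) ^ (∑ i, μ i)).coeff j * f j := by
        simp only [hexpand, finsetSum_coeff, coeff_natCast_mul, mul_sum, sum_mul]
        rw [sum_comm]
        push_cast
        ring_nf
    _ = _ := by simp only [coeff_X_add_one_pow]

end MultiIndex

section HahnCoefficients

variable (d N : ℕ) (κ : Fin (d + 1) → ℝ)

noncomputable def monicQCoeff (β γ : Fin (d + 1) → ℕ) : ℝ :=
  poch (-(N : ℝ)) (∑ i, β i) * pochV (fun i => κ i + 1) β /
      poch ((∑ i, κ i) + d + (∑ i, β i)) (∑ i, β i) *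
    (pochV (fun i => -(β i : ℝ)) γ * poch ((∑ i, κ i) + d + (∑ i, β i)) (∑ i, γ i) *
        (-1 : ℝ) ^ (∑ i, γ i) /
      (mfact γ * pochV (fun i => κ i + 1) γ * poch (-(N : ℝ)) (∑ i, γ i)))

noncomputable def monoCoeff (α β : Fin (d + 1) → ℕ) : ℝ :=
  (-1 : ℝ) ^ (∑ i, α i) *
    (pochV (fun i => -(α i : ℝ)) β * poch (-(N : ℝ)) (∑ i, α i) *
        pochV (fun i => κ i + 1) α * poch ((∑ i, κ i) + d + 1) (2 * ∑ i, β i) /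
      (mfact β * poch (-(N : ℝ)) (∑ i, β i) * pochV (fun i => κ i + 1) β *
        poch ((∑ i, κ i) + d + 1) ((∑ i, α i) + ∑ i, β i)))

lemma monicQ_eq_sum_monicQCoeff_mul_mono (β : Fin (d + 1) → ℕ) (x : Fin (d + 1) → ℝ) :
    monicQ d N κ β x = ∑ γ ∈ below β, monicQCoeff d N κ β γ * mono γ x := by
  simp only [monicQ, monicQCoeff, mul_sum, mul_assoc]

variable {d N κ}

lemma monicQCoeff_of_not_le {β γ : Fin (d + 1) → ℕ} (h : ¬γ ≤ β) :
    monicQCoeff d N κ β γ = 0 := by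
  simp [monicQCoeff, pochV_neg_natCast_of_not_le h]

lemma neg_one_lt_sum_add (hκ : ∀ i, -1 < κ i) : -1 < (∑ i, κ i) + d := by
  have := sum_lt_sum_of_nonempty univ_nonempty fun i (_ : i ∈ univ) => hκ i
  simp only [sum_const, card_univ, Fintype.card_fin, nsmul_eq_mul] at this
  push_cast at this
  linarith

lemma monoCoeff_mul_monicQCoeff (hκ : ∀ i, -1 < κ i) {α γ δ : Fin (d + 1) → ℕ}
    (hα : ∑ i, α i ≤ N) (hγδ : γ + δ ≤ α) :
    monoCoeff d N κ α (γ + δ) * monicQCoeff d N κ (γ + δ) γ =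
      (-1) ^ (∑ i, α i) * poch (-(N : ℝ)) (∑ i, α i) * pochV (fun i => κ i + 1) α *
          pochV (fun i => -(α i : ℝ)) γ /
          (mfact γ * pochV (fun i => κ i + 1) γ * poch (-(N : ℝ)) (∑ i, γ i)) *
        ((∏ i, (((α - γ) i).choose (δ i) : ℝ)) * ((-1) ^ (∑ i, δ i) *
          wellPoisedTerm ((∑ i, κ i) + d + 2 * (∑ i, γ i : ℕ)) (∑ i, (α - γ) i)
            (∑ i, δ i))) := by
  have ha := neg_one_lt_sum_add hκ
  have hκ₁ : ∀ i, 0 < κ i + 1 := fun i => by linarith [hκ i]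
  have hγα : γ ≤ α := le_trans le_self_add hγδ
  have hβ : ∑ i, (γ + δ) i = ∑ i, γ i + ∑ i, δ i := sum_add_distrib
  have hαs : ∑ i, α i = ∑ i, γ i + ∑ i, (α - γ) i := by
    rw [← sum_add_distrib]; exact sum_congr rfl fun i _ => (add_tsub_cancel_of_le (hγα i)).symm
  have hβα : ∑ i, (γ + δ) i ≤ ∑ i, α i := sum_le_sum fun i _ => hγδ i
  have hV := pochV_neg_natCast_add_mul α γ δ
  have hW := poch_ratio_eq_wellPoisedTerm ha (∑ i, γ i) (∑ i, (α - γ) i) (∑ i, δ i)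
  have hPNβ : poch (-(N : ℝ)) (∑ i, (γ + δ) i) ≠ 0 :=
    poch_neg_natCast_ne_zero (hβα.trans hα)
  have hPNγ : poch (-(N : ℝ)) (∑ i, γ i) ≠ 0 :=
    poch_neg_natCast_ne_zero ((sum_le_sum fun i _ => hγα i).trans hα)
  have hKβ := (pochV_pos hκ₁ (γ + δ)).ne'
  have hKγ := (pochV_pos hκ₁ γ).ne'
  have hFβ := (mfact_pos (γ + δ)).ne'
  have hFγ := (mfact_pos γ).ne'
  have hAβ : poch ((∑ i, κ i) + d + ↑(∑ i, (γ + δ) i)) (∑ i, (γ + δ) i) ≠ 0 :=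
    poch_add_natCast_ne_zero ha le_rfl
  have hL₁ : poch ((∑ i, κ i) + d + 1) (∑ i, α i + ∑ i, (γ + δ) i) ≠ 0 :=
    (poch_pos (by linarith) _).ne'
  rw [monoCoeff, monicQCoeff]
  rw [hβ] at hV hPNβ hAβ hL₁ ⊢
  rw [hαs] at hL₁ ⊢
  have hQ : pochV (fun i => -((γ + δ) i : ℝ)) γ ≠ 0 := pochV_neg_natCast_ne_zero le_self_add
  rw [← hW, eq_div_of_mul_eq hQ hV, pow_add]
  field_simp
  ring_nf
  simp [pow_mul']

lemma sum_monoCoeff_mul_monicQCoeff (hκ : ∀ i, -1 < κ i) {α γ : Fin (d + 1) → ℕ}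
    (hα : ∑ i, α i ≤ N) (hγ : γ ≤ α) :
    ∑ β ∈ below α, monoCoeff d N κ α β * monicQCoeff d N κ β γ =
      if γ = α then 1 else 0 := by
  have hb : -1 < (∑ i, κ i) + d + 2 * (∑ i, γ i : ℕ) := by
    linarith [neg_one_lt_sum_add hκ, (∑ i, γ i).cast_nonneg (α := ℝ)]
  rw [sum_below_eq_sum_below_sub hγ _ fun β h => by rw [monicQCoeff_of_not_le h, mul_zero]]
  rw [sum_congr rfl fun δ hδ => monoCoeff_mul_monicQCoeff hκ hα
    (add_le_of_le_tsub_left_of_le hγ (mem_below.1 hδ)), ← mul_sum]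
  rw [sum_below_prod_choose_mul (α - γ) fun j =>
    (-1) ^ j * wellPoisedTerm ((∑ i, κ i) + d + 2 * (∑ i, γ i : ℕ)) (∑ i, (α - γ) i) j]
  rw [sum_alternating_choose_mul_wellPoisedTerm hb]
  by_cases h : γ = α
  · subst h
    have := poch_neg_natCast_ne_zero hα
    have := (pochV_pos (fun i => (by linarith [hκ i] : 0 < κ i + 1)) γ).ne'
    have := (mfact_pos γ).ne'
    simp only [tsub_self, Pi.zero_apply, sum_const_zero, if_true, mul_one,
      pochV_neg_natCast_self]
    field_simp
    rw [← pow_mul, pow_mul', neg_one_sq, one_pow]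
  · obtain ⟨i, hi⟩ : ∃ i, γ i < α i := by
      by_contra! h'
      exact h (le_antisymm hγ h')
    have hM : ∑ i, (α - γ) i ≠ 0 :=
      (sum_pos' (fun i _ => Nat.zero_le _) ⟨i, mem_univ i, Nat.sub_pos_of_lt hi⟩).ne'
    rw [if_neg h, if_neg hM, mul_zero]

end HahnCoefficients

theorem mono_eq_sum_monicHahn_general (d N : ℕ) (κ : Fin (d + 1) → ℝ)
    (hκ : ∀ i, -1 < κ i) (x : Fin (d + 1) → ℕ)
    (α : Fin (d + 1) → ℕ) (hα : ∑ i, α i ≤ N) :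
    mono α (fun i => (x i : ℝ)) =
      (-1 : ℝ) ^ (∑ i, α i) *
        ∑ β ∈ below α,
          pochV (fun i => -(α i : ℝ)) β * poch (-(N : ℝ)) (∑ i, α i) *
              pochV (fun i => κ i + 1) α * poch ((∑ i, κ i) + d + 1) (2 * ∑ i, β i) /
              (mfact β * poch (-(N : ℝ)) (∑ i, β i) * pochV (fun i => κ i + 1) β *
                poch ((∑ i, κ i) + d + 1) ((∑ i, α i) + ∑ i, β i)) *
            monicQ d N κ β (fun i => (x i : ℝ)) := by
  set y : Fin (d + 1) → ℝ := fun i => (x i : ℝ)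
  have hQ : ∀ β ∈ below α,
      monicQ d N κ β y = ∑ γ ∈ below α, monicQCoeff d N κ β γ * mono γ y := by
    intro β hβ
    rw [monicQ_eq_sum_monicQCoeff_mul_mono]
    exact sum_subset (fun γ hγ => mem_below.2 ((mem_below.1 hγ).trans (mem_below.1 hβ)))
      fun γ _ hγ => by rw [monicQCoeff_of_not_le (mt mem_below.2 hγ), zero_mul]
  calc mono α y
      = ∑ γ ∈ below α,
          (∑ β ∈ below α, monoCoeff d N κ α β * monicQCoeff d N κ β γ) * mono γ y := by
        rw [sum_congr rfl fun γ hγ => by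
          rw [sum_monoCoeff_mul_monicQCoeff hκ hα (mem_below.1 hγ)]]
        simp [mem_below]
    _ = ∑ β ∈ below α, monoCoeff d N κ α β * monicQ d N κ β y := by
        simp only [sum_mul, mul_assoc]
        rw [sum_comm]
        exact sum_congr rfl fun β hβ => by rw [hQ β hβ, mul_sum]
    _ = _ := by
        rw [mul_sum]
        exact sum_congr rfl fun β _ => by rw [monoCoeff]; ring

/-- expansion of the shifted monomial `m_α` in monic Hahn polynomials. -/
theorem mono_eq_sum_monicHahn (d N : ℕ) (hd : 1 ≤ d) (κ : Fin (d + 1) → ℝ)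
    (hκ : ∀ i, -1 < κ i) (x : Fin (d + 1) → ℕ) (hx : x ∈ ZN d N)
    (α : Fin (d + 1) → ℕ) (hα : ∑ i, α i ≤ N) :
    mono α (fun i => (x i : ℝ)) =
      (-1 : ℝ) ^ (∑ i, α i) *
        ∑ β ∈ below α,
          pochV (fun i => -(α i : ℝ)) β * poch (-(N : ℝ)) (∑ i, α i) *
              pochV (fun i => κ i + 1) α * poch ((∑ i, κ i) + d + 1) (2 * ∑ i, β i) /
              (mfact β * poch (-(N : ℝ)) (∑ i, β i) * pochV (fun i => κ i + 1) β *
                poch ((∑ i, κ i) + d + 1) ((∑ i, α i) + ∑ i, β i)) *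
            monicQ d N κ β (fun i => (x i : ℝ)) :=
  mono_eq_sum_monicHahn_general d N κ hκ x α hα
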